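/- arXiv:math/0309351 — 2 statements merged into one kernel-verified Lean document; each statement's English description precedes it below -/
import Mathlib

section
/- Let E be a function on vertices of a finite DAG with unique sink t such that E(t) = 0 and at each non-sink vertex v, E(v) = 1 + (1/|out(v)|)·∑_{u ∈ out-neighbors(v)} E(u). Suppose N₁ and N are functions on vertices with the property that for every vertex v there is a convex combination representation E(v) = c + ∑ᵢ λᵢ E(wᵢ) (λᵢ > 0, ∑λᵢ = 1) with α·∑ᵢ λᵢ(N₁(v)−N₁(wᵢ)) + β·∑ᵢ λᵢ(N(v)−N(wᵢ)) ≥ c, where each wᵢ satisfies N(wᵢ) < N(v). Then E(v) ≤ α·N₁(v) + β·N(v) for all vertices v with E defined, provided the bound holds when N(v) = 0 (i.e., E(v) = 0 there). -/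
/-!
Strong induction on `N`. With `f = α N₁ + β N`, the bounds `E wᵢ ≤ f wᵢ` average to
`∑ λᵢ E wᵢ ≤ f v - ∑ λᵢ (f v - f wᵢ)`, and the unwinding inequality says that this average drop
pays for the constant `c`.
-/

open Finset

theorem le_of_eq_add_convex_combination {ι : Type*} [Fintype ι] {x y c : ℝ} {lam e g : ι → ℝ}
    (hlam : ∀ i, 0 ≤ lam i) (hsum : ∑ i, lam i = 1) (hx : x = c + ∑ i, lam i * e i)
    (hc : c ≤ ∑ i, lam i * (y - g i)) (heg : ∀ i, e i ≤ g i) : x ≤ y := by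
  have hdrop : ∑ i, lam i * (y - g i) = y - ∑ i, lam i * g i := by
    simp only [mul_sub, sum_sub_distrib, ← sum_mul, hsum, one_mul]
  have hterms : ∑ i, lam i * e i ≤ ∑ i, lam i * g i :=
    sum_le_sum fun i _ => mul_le_mul_of_nonneg_left (heg i) (hlam i)
  linarith

theorem linear_combination_sum_mul_sub {ι : Type*} [Fintype ι] (α β a b : ℝ)
    (lam as bs : ι → ℝ) :
    α * ∑ i, lam i * (a - as i) + β * ∑ i, lam i * (b - bs i) =
      ∑ i, lam i * ((α * a + β * b) - (α * as i + β * bs i)) := by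
  rw [mul_sum, mul_sum, ← sum_add_distrib]
  exact sum_congr rfl fun i _ => by ring

theorem stmt_9_general {V : Type}
    (α β : ℝ) (hα : 0 ≤ α) (hβ : 0 ≤ β)
    (E : V → ℝ) (N₁ N : V → ℕ)
    (hbase : ∀ v : V, N v = 0 → E v = 0)
    (hstep : ∀ v : V, 0 < N v →
      ∃ (k : ℕ) (w : Fin k → V) (lam : Fin k → ℝ) (c : ℝ),
        (∀ i, 0 < lam i) ∧
        (∑ i, lam i) = 1 ∧
        (∀ i, N (w i) < N v) ∧
        E v = c + ∑ i, lam i * E (w i) ∧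
        α * (∑ i, lam i * ((N₁ v : ℝ) - (N₁ (w i) : ℝ))) +
          β * (∑ i, lam i * ((N v : ℝ) - (N (w i) : ℝ))) ≥ c) :
    ∀ v : V, E v ≤ α * (N₁ v : ℝ) + β * (N v : ℝ) := by
  intro v
  induction v using (measure N).wf.induction with
  | _ v ih =>
    rcases (N v).eq_zero_or_pos with hzero | hpos
    · rw [hbase v hzero, hzero, Nat.cast_zero]
      positivity
    · obtain ⟨k, w, lam, c, hlam, hsum, hlt, hE, hc⟩ := hstep v hpos
      refine le_of_eq_add_convex_combination (fun i => (hlam i).le) hsum hE ?_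
        fun i => ih (w i) (hlt i)
      rwa [ge_iff_le, linear_combination_sum_mul_sub] at hc

/-- The inductive scheme of the upper-bound proof: if `E` vanishes
where `N` vanishes, and every vertex `v` with `N v > 0` admits a convex-combination
unwinding `E v = c + ∑ᵢ λᵢ E(wᵢ)` with `N(wᵢ) < N v` and
`α ∑ᵢ λᵢ (N₁ v - N₁ wᵢ) + β ∑ᵢ λᵢ (N v - N wᵢ) ≥ c`, then
`E v ≤ α N₁ v + β N v` for every vertex `v`. -/
theorem stmt_9 {V : Type} [Fintype V]
    (α β : ℝ) (hα : 0 ≤ α) (hβ : 0 ≤ β)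
    (E : V → ℝ) (N₁ N : V → ℕ)
    (hbase : ∀ v : V, N v = 0 → E v = 0)
    (hstep : ∀ v : V, 0 < N v →
      ∃ (k : ℕ) (w : Fin k → V) (lam : Fin k → ℝ) (c : ℝ),
        (∀ i, 0 < lam i) ∧
        (∑ i, lam i) = 1 ∧
        (∀ i, N (w i) < N v) ∧
        E v = c + ∑ i, lam i * E (w i) ∧
        α * (∑ i, lam i * ((N₁ v : ℝ) - (N₁ (w i) : ℝ))) +
          β * (∑ i, lam i * ((N v : ℝ) - (N (w i) : ℝ))) ≥ c) :
    ∀ v : V, E v ≤ α * (N₁ v : ℝ) + β * (N v : ℝ) :=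
  stmt_9_general α β hα hβ E N₁ N hbase hstep
end

section
/- In a 3-regular 3-connected graph, there do not exist four distinct vertices v, w₁, w₂, w₄ such that: v has neighbors including w₁ and w₂; w₁ has neighbors v, w₂, w₄; w₂ has neighbors v, w₁, w₄; and w₄ has neighbors w₁, w₂ and one further vertex — unless the whole graph has only these vertices plus one more. Equivalently: if in a 3-connected 3-regular graph with more than 5 vertices the set {v, w₁, w₂, w₄} induces the above adjacencies, deleting the edge from w₄ to its third neighbor and the third edge at v would disconnect the graph, a contradiction. -/
/-!
By 3-regularity the neighbourhoods of `w₁` and `w₂` are `{v, w₂, w₄}` and `{v, w₁, w₄}`, so the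
only edges leaving `{w₁, w₂}` end in `v` or `w₄`. Deleting these two vertices therefore separates
`{w₁, w₂}` from any fifth vertex, contradicting 3-connectivity.
-/

namespace SimpleGraph

variable {V : Type*} {G : SimpleGraph V}

theorem Preconnected.mem_of_forall_adj_mem (hG : G.Preconnected) {T : Set V}
    (hT : ∀ ⦃x y⦄, G.Adj x y → x ∈ T → y ∈ T) {a : V} (ha : a ∈ T) (b : V) : b ∈ T := by
  by_contra hb
  obtain ⟨d, -, hd, hd'⟩ := (hG a b).some.exists_boundary_dart T ha hb
  exact hd' (hT d.adj hd)

variable [Fintype V] [DecidableEq V] [DecidableRel G.Adj]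

theorem neighborFinset_eq_of_degree_eq_three {w a b c : V} (hdeg : G.degree w = 3)
    (hab : a ≠ b) (hac : a ≠ c) (hbc : b ≠ c)
    (ha : G.Adj w a) (hb : G.Adj w b) (hc : G.Adj w c) :
    G.neighborFinset w = {a, b, c} := by
  refine (Finset.eq_of_subset_of_card_le ?_ ?_).symm
  · simp [Finset.insert_subset_iff, ha, hb, hc]
  · rw [card_neighborFinset_eq_degree, hdeg, Finset.card_insert_of_notMem (by simp [hab, hac]),
      Finset.card_pair hbc]

theorem eq_of_adj_of_neighborFinset_eq {w a b c y : V} (hw : G.neighborFinset w = {a, b, c})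
    (hy : G.Adj w y) (hya : y ≠ a) (hyc : y ≠ c) : y = b := by
  have hmem : y ∈ G.neighborFinset w := (mem_neighborFinset _ _ _).2 hy
  simp_all

theorem not_preconnected_induce_of_neighborFinset_eq {v w₁ w₂ w₄ z : V}
    (hn₁ : G.neighborFinset w₁ = {v, w₂, w₄}) (hn₂ : G.neighborFinset w₂ = {v, w₁, w₄})
    (hw₁ : w₁ ∉ ({v, w₄} : Finset V)) (hz : z ∉ ({v, w₁, w₂, w₄} : Finset V)) :
    ¬ (G.induce {x : V | x ∉ ({v, w₄} : Finset V)}).Preconnected := by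
  intro hconn
  have hclosed : ∀ ⦃x y⦄, (G.induce {x : V | x ∉ ({v, w₄} : Finset V)}).Adj x y →
      x ∈ {x | x.1 = w₁ ∨ x.1 = w₂} → y ∈ {x | x.1 = w₁ ∨ x.1 = w₂} := by
    intro x y hxy hx
    have hy : y.1 ≠ v ∧ y.1 ≠ w₄ := by simpa using y.2
    rcases hx with hx | hx
    · exact .inr (eq_of_adj_of_neighborFinset_eq hn₁ (hx ▸ hxy) hy.1 hy.2)
    · exact .inl (eq_of_adj_of_neighborFinset_eq hn₂ (hx ▸ hxy) hy.1 hy.2)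
  have hzw : z = w₁ ∨ z = w₂ :=
    hconn.mem_of_forall_adj_mem hclosed (a := ⟨w₁, hw₁⟩) (.inl rfl) ⟨z, by simp_all⟩
  rcases hzw with rfl | rfl <;> simp at hz

end SimpleGraph

open SimpleGraph in
theorem stmt_12_general {V : Type} [Fintype V] [DecidableEq V] (G : SimpleGraph V)
    [DecidableRel G.Adj]
    (hreg : ∀ v : V, G.degree v = 3)
    (h3conn : ∀ S : Finset V, S.card ≤ 2 → (G.induce {v : V | v ∉ S}).Connected)
    (hbig : 5 < Fintype.card V)
    (v w₁ w₂ w₄ : V)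
    (hvw₁ : v ≠ w₁) (hvw₂ : v ≠ w₂) (hvw₄ : v ≠ w₄)
    (hw₁w₄ : w₁ ≠ w₄) (hw₂w₄ : w₂ ≠ w₄)
    (a1 : G.Adj v w₁) (a2 : G.Adj v w₂)
    (a3 : G.Adj w₁ w₂) (a4 : G.Adj w₁ w₄) (a5 : G.Adj w₂ w₄) :
    False := by
  have hn₁ := neighborFinset_eq_of_degree_eq_three (hreg w₁) hvw₂ hvw₄ hw₂w₄ a1.symm a3 a4
  have hn₂ := neighborFinset_eq_of_degree_eq_three (hreg w₂) hvw₁ hvw₄ hw₁w₄ a2.symm a3.symm a5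
  obtain ⟨z, -, hz⟩ := Finset.exists_mem_notMem_of_card_lt_card
    (s := {v, w₁, w₂, w₄}) (t := Finset.univ) (Finset.card_le_four.trans_lt (by rw [Finset.card_univ]; omega))
  exact not_preconnected_induce_of_neighborFinset_eq hn₁ hn₂ (by simp [hvw₁.symm, hw₁w₄]) hz
    (h3conn _ Finset.card_le_two).preconnected

/-- In a 3-regular 3-connected graph with more than 5 vertices there
is no configuration of four distinct vertices `v, w₁, w₂, w₄` with `v` adjacent to
`w₁, w₂` (but not `w₄`), `w₁` adjacent to `v, w₂, w₄`, `w₂` adjacent to `v, w₁, w₄`: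
cutting the two edges joining `{v, w₁, w₂, w₄}` to the rest would disconnect the
graph, contradicting 3-connectivity. -/
theorem stmt_12 {V : Type} [Fintype V] [DecidableEq V] (G : SimpleGraph V)
    [DecidableRel G.Adj]
    (hreg : ∀ v : V, G.degree v = 3)
    (h4 : 4 ≤ Fintype.card V)
    (h3conn : ∀ S : Finset V, S.card ≤ 2 → (G.induce {v : V | v ∉ S}).Connected)
    (hbig : 5 < Fintype.card V)
    (v w₁ w₂ w₄ : V)
    (hvw₁ : v ≠ w₁) (hvw₂ : v ≠ w₂) (hvw₄ : v ≠ w₄)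
    (hw₁w₂ : w₁ ≠ w₂) (hw₁w₄ : w₁ ≠ w₄) (hw₂w₄ : w₂ ≠ w₄)
    (a1 : G.Adj v w₁) (a2 : G.Adj v w₂)
    (a3 : G.Adj w₁ w₂) (a4 : G.Adj w₁ w₄) (a5 : G.Adj w₂ w₄)
    (a6 : ¬ G.Adj v w₄) :
    False :=
  stmt_12_general G hreg h3conn hbig v w₁ w₂ w₄ hvw₁ hvw₂ hvw₄ hw₁w₄ hw₂w₄ a1 a2 a3 a4 a5
end
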